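/- Let σ₀^k = 2^{−(k−1)} Σ_{i∈Ω₀^k} |φ_{i₁}⟩⟨φ_{i₁}| ⊗ ⋯ ⊗ |φ_{i_k}⟩⟨φ_{i_k}| and σ₁^k defined analogously over Ω₁^k, where |φ₀⟩ = |+⟩ and |φ₁⟩ = |1⟩. Then D(σ₀^k, σ₁^k) = (sin(π/4))^k = (√2/2)^k. -/

import Mathlib

open Matrix Kronecker ComplexOrder

/-- `|M| = √(Mᴴ M)`, the positive-semidefinite absolute value of a matrix. -/
noncomputable def matAbs {n : Type*} [Fintype n] [DecidableEq n]
    (M : Matrix n n ℂ) : Matrix n n ℂ :=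
  (Matrix.posSemidef_conjTranspose_mul_self M).1.eigenvectorUnitary.1 *
    diagonal ((↑) ∘ (√·) ∘ (Matrix.posSemidef_conjTranspose_mul_self M).1.eigenvalues) *
    (star (Matrix.posSemidef_conjTranspose_mul_self M).1.eigenvectorUnitary : Matrix n n ℂ)

/-- Trace distance `D(A,B) = (1/2) Tr |A - B|`. -/
noncomputable def traceDist {n : Type*} [Fintype n] [DecidableEq n]
    (A B : Matrix n n ℂ) : ℝ :=
  (1 / 2) * (Matrix.trace (matAbs (A - B))).re

/-- |+⟩⟨+| -/
noncomputable def projPlus : Matrix (Fin 2) (Fin 2) ℂ := !![1/2, 1/2; 1/2, 1/2]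

/-- |1⟩⟨1| -/
noncomputable def projOne : Matrix (Fin 2) (Fin 2) ℂ := !![0, 0; 0, 1]

/-- |φ₀⟩⟨φ₀| = |+⟩⟨+| and |φ₁⟩⟨φ₁| = |1⟩⟨1| -/
noncomputable def phiProj : Fin 2 → Matrix (Fin 2) (Fin 2) ℂ := ![projPlus, projOne]

/-- σ_b^k : equal mixture over Ω_b^k of ⊗_j |φ_{i_j}⟩⟨φ_{i_j}|. -/
noncomputable def sigmaMix (b : Fin 2) (k : ℕ) :
    Matrix (Fin k → Fin 2) (Fin k → Fin 2) ℂ :=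
  ((2 : ℂ) ^ (k - 1))⁻¹ •
    ∑ i ∈ Finset.univ.filter (fun i : Fin k → Fin 2 => ∑ j, i j = b),
      Matrix.of fun x y => ∏ j, phiProj (i j) (x j) (y j)

/-- the conjugate-coding states |r⟩_s : |0⟩₀=|0⟩, |1⟩₀=|1⟩, |0⟩₁=|+⟩, |1⟩₁=|−⟩. -/
noncomputable def cket (r s : Fin 2) : Fin 2 → ℂ :=
  if s = 0 then (if r = 0 then ![1, 0] else ![0, 1])
  else (if r = 0 then ![(Real.sqrt 2 / 2 : ℂ), (Real.sqrt 2 / 2 : ℂ)]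
        else ![(Real.sqrt 2 / 2 : ℂ), -(Real.sqrt 2 / 2 : ℂ)])

/-- |r⟩_s⟨r| -/
noncomputable def cProj (r s : Fin 2) : Matrix (Fin 2) (Fin 2) ℂ :=
  Matrix.vecMulVec (cket r s) (star (cket r s))

/-- ρ_b^k : equal mixture over keys s ∈ {0,1}^k and r ∈ Ω_b^k of ⊗_j |r_j⟩_{s_j}⟨r_j|. -/
noncomputable def rhoMix (b : Fin 2) (k : ℕ) :
    Matrix (Fin k → Fin 2) (Fin k → Fin 2) ℂ :=
  ((2 : ℂ) ^ (2 * k - 1))⁻¹ •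
    ∑ r ∈ Finset.univ.filter (fun r : Fin k → Fin 2 => ∑ j, r j = b),
      ∑ s : Fin k → Fin 2,
        Matrix.of fun x y => ∏ j, cProj (r j) (s j) (x j) (y j)

/-- the Hadamard matrix -/
noncomputable def Hmat : Matrix (Fin 2) (Fin 2) ℂ :=
  ((Real.sqrt 2 / 2 : ℝ) : ℂ) • !![1, 1; 1, -1]

/-- H⁰ = I and H¹ = H -/
noncomputable def Hpow : Fin 2 → Matrix (Fin 2) (Fin 2) ℂ := ![1, Hmat]

/-- H^{i₁} ⊗ ⋯ ⊗ H^{i_k} -/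
noncomputable def Hten {k : ℕ} (i : Fin k → Fin 2) :
    Matrix (Fin k → Fin 2) (Fin k → Fin 2) ℂ :=
  Matrix.of fun x y => ∏ j, Hpow (i j) (x j) (y j)

/-!
Expanding `∏ⱼ (P₀ − P₁)` with `Pᵣ = |φᵣ⟩⟨φᵣ|` produces every product `⊗ⱼ P_{iⱼ}` with the sign
`(−1)^(i₁ + ⋯ + i_k)`, so `σ₀ − σ₁ = 2^{−(k−1)} (P₀ − P₁)^{⊗k}`. The Hermitian matrix `P₀ − P₁`
squares to `(1 − |⟨φ₀|φ₁⟩|²) I = sin²(π/4) I`, hence `|σ₀ − σ₁| = 2^{−(k−1)} sin(π/4)^k I`, and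
half its trace over the `2^k`-dimensional space is `sin(π/4)^k`.
-/

section TraceDistance

variable {n : Type*} [Fintype n] [DecidableEq n]

theorem matAbs_eq_cfc_sqrt (M : Matrix n n ℂ) : matAbs M = cfc Real.sqrt (Mᴴ * M) := by
  rw [(posSemidef_conjTranspose_mul_self M).1.cfc_eq, IsHermitian.cfc,
    Unitary.conjStarAlgAut_apply]
  rfl

theorem matAbs_of_conjTranspose_mul_self_eq_smul_one {M : Matrix n n ℂ} {c : ℝ} (hc : 0 ≤ c)
    (hM : Mᴴ * M = ((c ^ 2 : ℝ) : ℂ) • 1) : matAbs M = (c : ℂ) • 1 := by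
  have hscalar (r : ℝ) : (r : ℂ) • (1 : Matrix n n ℂ) = algebraMap ℝ _ r := by
    rw [Algebra.algebraMap_eq_smul_one, ← algebraMap_smul ℂ]
    rfl
  rw [hscalar] at hM ⊢
  rw [matAbs_eq_cfc_sqrt, hM, cfc_algebraMap, Real.sqrt_sq hc]

theorem traceDist_of_conjTranspose_mul_self_sub_eq_smul_one {A B : Matrix n n ℂ} {c : ℝ}
    (hc : 0 ≤ c) (h : (A - B)ᴴ * (A - B) = ((c ^ 2 : ℝ) : ℂ) • 1) :
    traceDist A B = c * Fintype.card n / 2 := by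
  rw [traceDist, matAbs_of_conjTranspose_mul_self_eq_smul_one hc h, trace_smul, trace_one]
  simp only [smul_eq_mul, Complex.re_ofReal_mul, Complex.natCast_re]
  ring

end TraceDistance

namespace Matrix

variable {ι l m n α : Type*} [Fintype ι]

def piKronecker [CommMonoid α] (A : ι → Matrix m n α) : Matrix (ι → m) (ι → n) α :=
  of fun x y => ∏ j, A j (x j) (y j)

theorem piKronecker_apply [CommMonoid α] (A : ι → Matrix m n α) (x : ι → m) (y : ι → n) :
    piKronecker A x y = ∏ j, A j (x j) (y j) := rfl

theorem piKronecker_one [DecidableEq m] [CommMonoidWithZero α] :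
    piKronecker (fun _ : ι => (1 : Matrix m m α)) = 1 := by
  ext x y
  by_cases h : x = y
  · subst h
    simp [piKronecker_apply]
  · obtain ⟨j, hj⟩ := Function.ne_iff.mp h
    rw [piKronecker_apply, one_apply_ne h]
    exact Finset.prod_eq_zero (Finset.mem_univ j) (one_apply_ne hj)

theorem piKronecker_smul [CommMonoid α] (c : ι → α) (A : ι → Matrix m n α) :
    piKronecker (fun j => c j • A j) = (∏ j, c j) • piKronecker A := by
  ext x y
  simp [piKronecker_apply, Finset.prod_mul_distrib]

theorem piKronecker_sum [CommSemiring α] [DecidableEq ι] {κ : Type*} [Fintype κ]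
    (A : ι → κ → Matrix m n α) :
    piKronecker (fun j => ∑ r, A j r) = ∑ i : ι → κ, piKronecker (fun j => A j (i j)) := by
  ext x y
  simp [piKronecker_apply, sum_apply, Finset.prod_univ_sum]

theorem piKronecker_mul [CommSemiring α] [Fintype m] [DecidableEq ι]
    (A : ι → Matrix l m α) (B : ι → Matrix m n α) :
    piKronecker A * piKronecker B = piKronecker (fun j => A j * B j) := by
  ext x y
  simp [piKronecker_apply, mul_apply, Finset.prod_univ_sum, Finset.prod_mul_distrib]

theorem conjTranspose_piKronecker [CommMonoid α] [StarMul α] (A : ι → Matrix m n α) :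
    (piKronecker A)ᴴ = piKronecker (fun j => (A j)ᴴ) := by
  ext x y
  simp [piKronecker_apply, star_prod]

end Matrix

theorem AddChar.map_sum_eq_prod {A M ι : Type*} [AddCommMonoid A] [CommMonoid M]
    (ψ : AddChar A M) (s : Finset ι) (f : ι → A) : ψ (∑ i ∈ s, f i) = ∏ i ∈ s, ψ (f i) := by
  induction s using Finset.cons_induction with
  | empty => simp
  | cons a s ha ih => rw [Finset.sum_cons, Finset.prod_cons, AddChar.map_add_eq_mul, ih]

def paritySign : AddChar (Fin 2) ℂ where
  toFun a := (-1) ^ (a : ℕ)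
  map_zero_eq_one' := rfl
  map_add_eq_mul' a b := by fin_cases a <;> fin_cases b <;> simp

@[simp] theorem paritySign_zero : paritySign 0 = 1 := AddChar.map_zero_eq_one _

@[simp] theorem paritySign_one : paritySign 1 = -1 := pow_one _

theorem sum_paritySign_smul {α M : Type*} [Fintype α] [AddCommGroup M] [Module ℂ M]
    (p : α → Fin 2) (f : α → M) :
    ∑ a, paritySign (p a) • f a = ∑ a with p a = 0, f a - ∑ a with p a = 1, f a := by
  rw [← Finset.sum_fiberwise Finset.univ p, Fin.sum_univ_two, sub_eq_add_neg,
    ← Finset.sum_neg_distrib]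
  congr 1 <;> refine Finset.sum_congr rfl fun a ha => ?_ <;>
    simp [(Finset.mem_filter.mp ha).2]

theorem sigmaMix_zero_sub_sigmaMix_one (k : ℕ) :
    sigmaMix 0 k - sigmaMix 1 k =
      ((2 : ℂ) ^ (k - 1))⁻¹ • piKronecker (fun _ : Fin k => projPlus - projOne) := by
  have hdiff : projPlus - projOne = ∑ r, paritySign r • phiProj r := by
    simp [Fin.sum_univ_two, phiProj, sub_eq_add_neg]
  rw [sigmaMix, sigmaMix, ← smul_sub, ← sum_paritySign_smul, hdiff, piKronecker_sum]
  simp only [piKronecker_smul, ← AddChar.map_sum_eq_prod]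
  rfl

theorem conjTranspose_mul_self_projPlus_sub_projOne :
    (projPlus - projOne)ᴴ * (projPlus - projOne) =
      ((Real.sin (Real.pi / 4) ^ 2 : ℝ) : ℂ) • 1 := by
  have hsin : Real.sin (Real.pi / 4) ^ 2 = 2⁻¹ := by
    rw [Real.sin_pi_div_four, div_pow, Real.sq_sqrt zero_le_two]
    norm_num
  rw [hsin]
  ext a b
  fin_cases a <;> fin_cases b <;>
    simp [projPlus, projOne, mul_apply, Fin.sum_univ_two, Complex.conj_ofNat] <;> norm_num

theorem conjTranspose_mul_self_sigmaMix_sub (k : ℕ) :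
    (sigmaMix 0 k - sigmaMix 1 k)ᴴ * (sigmaMix 0 k - sigmaMix 1 k) =
      (((((2 : ℝ) ^ (k - 1))⁻¹ * Real.sin (Real.pi / 4) ^ k) ^ 2 : ℝ) : ℂ) • 1 := by
  rw [sigmaMix_zero_sub_sigmaMix_one, conjTranspose_smul, Matrix.smul_mul, Matrix.mul_smul,
    conjTranspose_piKronecker, piKronecker_mul, conjTranspose_mul_self_projPlus_sub_projOne,
    piKronecker_smul, piKronecker_one]
  simp only [smul_smul, Finset.prod_const, Finset.card_univ, Fintype.card_fin]
  congr 1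
  push_cast
  simp only [star_inv₀, star_pow, star_ofNat]
  ring

theorem traceDist_sigmaMix (k : ℕ) (hk : 1 ≤ k) :
    traceDist (sigmaMix 0 k) (sigmaMix 1 k) = Real.sin (Real.pi / 4) ^ k ∧
      Real.sin (Real.pi / 4) = Real.sqrt 2 / 2 := by
  refine ⟨?_, Real.sin_pi_div_four⟩
  have hsin : 0 ≤ Real.sin (Real.pi / 4) := by
    rw [Real.sin_pi_div_four]
    positivity
  rw [traceDist_of_conjTranspose_mul_self_sub_eq_smul_one (by positivity)
    (conjTranspose_mul_self_sigmaMix_sub k), Fintype.card_fun, Fintype.card_fin, Fintype.card_fin]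
  obtain ⟨j, rfl⟩ : ∃ j, k = j + 1 := ⟨k - 1, by omega⟩
  push_cast
  field_simp
  ring
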